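/- arXiv:2103.05194 — 3 statements merged into one kernel-verified Lean document; each statement's English description precedes it below -/
import Mathlib

section
/- Let A, X, B be N×N real symmetric matrices such that A ⪯ X and X ⪯ B in the Loewner order. Then for all indices i ≠ j, the off-diagonal entries satisfy the upper bound X_{ij} ≤ A_{ij} + sqrt((B_{ii} − A_{ii})(B_{jj} − A_{jj})). -/
/-!
`X - A` is positive semidefinite, hence a Gram matrix `Cᵀ C`, and Cauchy–Schwarz for the columns
of `C` bounds its `(i, j)` entry by `√((X - A) i i * (X - A) j j)`. Since `B - X` is positive
semidefinite, the diagonal of `X - A` is dominated by that of `B - A`.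
-/

open Matrix MatrixOrder

theorem Matrix.PosSemidef.apply_le_sqrt_mul_diag {n : Type*} [Fintype n] {M : Matrix n n ℝ}
    (hM : M.PosSemidef) (i j : n) : M i j ≤ √(M i i * M j j) := by
  classical
  obtain ⟨C, rfl⟩ := CStarAlgebra.nonneg_iff_eq_star_mul_self.mp hM.nonneg
  simpa only [star_eq_conjTranspose, mul_apply, conjTranspose_apply, star_trivial, ← sq,
    Real.sqrt_mul (Finset.sum_nonneg fun k _ ↦ sq_nonneg (C k i))]
    using Real.sum_mul_le_sqrt_mul_sqrt Finset.univ (fun k ↦ C k i) (fun k ↦ C k j)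

theorem Matrix.PosSemidef.apply_le_sqrt_mul_diag_of_le {n : Type*} [Fintype n]
    {P Q : Matrix n n ℝ} (hP : P.PosSemidef) (hPQ : (Q - P).PosSemidef) (i j : n) :
    P i j ≤ √(Q i i * Q j j) := by
  have hdiag (k : n) : P k k ≤ Q k k := sub_nonneg.mp (by simpa using hPQ.diag_nonneg (i := k))
  calc P i j ≤ √(P i i * P j j) := hP.apply_le_sqrt_mul_diag i j
    _ ≤ √(Q i i * Q j j) :=
      Real.sqrt_le_sqrt (mul_le_mul (hdiag i) (hdiag j) hP.diag_nonneg
        (hP.diag_nonneg.trans (hdiag i)))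

theorem offdiag_upper_bound_loewner_sandwich_general (N : ℕ)
    (A X B : Matrix (Fin N) (Fin N) ℝ)
    (hAX : (X - A).PosSemidef) (hXB : (B - X).PosSemidef) :
    ∀ i j : Fin N, i ≠ j →
      X i j ≤ A i j + Real.sqrt ((B i i - A i i) * (B j j - A j j)) := by
  intro i j _
  have hXA_le_BA : ((B - A) - (X - A)).PosSemidef := by rwa [sub_sub_sub_cancel_right]
  have h := hAX.apply_le_sqrt_mul_diag_of_le hXA_le_BA i j
  simp only [Matrix.sub_apply] at h
  linarith

/-- If `A ⪯ X ⪯ B` in the Loewner order (for real symmetric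
matrices), then the off-diagonal entries satisfy
`X i j ≤ A i j + √((B i i − A i i)(B j j − A j j))`. -/
theorem offdiag_upper_bound_loewner_sandwich (N : ℕ)
    (A X B : Matrix (Fin N) (Fin N) ℝ)
    (hA : A.IsSymm) (hX : X.IsSymm) (hB : B.IsSymm)
    (hAX : (X - A).PosSemidef) (hXB : (B - X).PosSemidef) :
    ∀ i j : Fin N, i ≠ j →
      X i j ≤ A i j + Real.sqrt ((B i i - A i i) * (B j j - A j j)) :=
  offdiag_upper_bound_loewner_sandwich_general N A X B hAX hXB
end

section
/- Let A, X, B be N×N real symmetric matrices such that A ⪯ X and X ⪯ B in the Loewner order. Then for all indices i ≠ j, the off-diagonal entries satisfy the lower bound X_{ij} ≥ B_{ij} − sqrt((B_{ii} − A_{ii})(B_{jj} − A_{jj})). -/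
/-!
A 2×2 principal minor of the positive semidefinite matrix `B - X` is nonnegative, so
`(B - X) i j ≤ √((B - X) i i * (B - X) j j)`; and `A ⪯ X` bounds the diagonal of `B - X`
by that of `B - A`.
-/

namespace Matrix.PosSemidef

variable {n : Type*} {M : Matrix n n ℝ}

lemma apply_mul_apply_le (hM : M.PosSemidef) (i j : n) :
    M i j * M i j ≤ M i i * M j j := by
  classical
  have hminor := (hM.submatrix ![i, j]).det_nonneg
  have hsymm : M j i = M i j := by simpa using hM.isHermitian.apply i j
  rw [det_fin_two] at hminor
  simp only [submatrix_apply, Matrix.cons_val_zero, Matrix.cons_val_one, hsymm] at hminor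
  linarith

lemma apply_le_sqrt_mul (hM : M.PosSemidef) (i j : n) :
    M i j ≤ √(M i i * M j j) :=
  (le_abs_self _).trans (Real.abs_le_sqrt (by simpa [sq] using hM.apply_mul_apply_le i j))

end Matrix.PosSemidef

theorem offdiag_lower_bound_loewner_sandwich_general (N : ℕ)
    (A X B : Matrix (Fin N) (Fin N) ℝ)
    (hAX : (X - A).PosSemidef) (hXB : (B - X).PosSemidef) :
    ∀ i j : Fin N, i ≠ j →
      B i j - Real.sqrt ((B i i - A i i) * (B j j - A j j)) ≤ X i j := by
  intro i j _
  have hdiag_le (k : Fin N) : (B - X) k k ≤ B k k - A k k := by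
    have := hAX.diag_nonneg (i := k)
    simp only [Matrix.sub_apply] at this ⊢
    linarith
  have hbound : (B - X) i j ≤ √((B i i - A i i) * (B j j - A j j)) :=
    (hXB.apply_le_sqrt_mul i j).trans <| Real.sqrt_le_sqrt <|
      mul_le_mul (hdiag_le i) (hdiag_le j) hXB.diag_nonneg (hXB.diag_nonneg.trans (hdiag_le i))
  rw [Matrix.sub_apply] at hbound
  linarith

/-- If `A ⪯ X ⪯ B` in the Loewner order (for real symmetric
matrices), then the off-diagonal entries satisfy
`X i j ≥ B i j − √((B i i − A i i)(B j j − A j j))`. -/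
theorem offdiag_lower_bound_loewner_sandwich (N : ℕ)
    (A X B : Matrix (Fin N) (Fin N) ℝ)
    (hA : A.IsSymm) (hX : X.IsSymm) (hB : B.IsSymm)
    (hAX : (X - A).PosSemidef) (hXB : (B - X).PosSemidef) :
    ∀ i j : Fin N, i ≠ j →
      B i j - Real.sqrt ((B i i - A i i) * (B j j - A j j)) ≤ X i j :=
  offdiag_lower_bound_loewner_sandwich_general N A X B hAX hXB
end

section
/- Let L be an N×N real symmetric positive definite matrix, W an N×N real symmetric matrix, and a, c ∈ ℝ^N. Define g(s, t) = trace(W·(L + s·a·aᵀ + t·c·cᵀ)^{-1}) for (s, t) in a neighborhood of (0, 0) where the inverse exists. Then the mixed second partial derivative of g at (0, 0) equals 2·(cᵀ·L^{-1}·W·L^{-1}·a)·(cᵀ·L^{-1}·a). -/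
open Matrix

/-!
Write `M = L + s • a aᵀ`. Differentiating `(M + t • C)⁻¹` gives `-M⁻¹ C M⁻¹`, so the inner
derivative is `-tr (W M⁻¹ C M⁻¹)`; differentiating this in `s` at `0` gives, with `X = L⁻¹`,
`tr (W X A X C X) + tr (W X C X A X)`. For rank-one `A = a aᵀ` and `C = c cᵀ` each trace
factors, by cyclicity, into `(aᵀ X c) (cᵀ X W X a)`, and the two terms agree because `X` and
`X W X` are symmetric.
-/

namespace Matrix

section Calculus

variable {𝕜 n : Type*} [RCLike 𝕜] [Fintype n] [DecidableEq n]

-- Only the topology matters for derivatives; this norm makes `Matrix n n 𝕜` a normed algebra.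
attribute [local instance] Matrix.linftyOpNormedRing Matrix.linftyOpNormedAlgebra

theorem _root_.HasDerivAt.matrix_trace {f : 𝕜 → Matrix n n 𝕜} {f' : Matrix n n 𝕜} {x : 𝕜}
    (hf : HasDerivAt f f' x) : HasDerivAt (fun t => (f t).trace) f'.trace x :=
  (traceLinearMap n 𝕜 𝕜).toContinuousLinearMap.hasFDerivAt.comp_hasDerivAt x hf

theorem hasDerivAt_inv_add_smul {M : Matrix n n 𝕜} (hM : IsUnit M) (B : Matrix n n 𝕜) :
    HasDerivAt (fun t : 𝕜 => (M + t • B)⁻¹) (-(M⁻¹ * B * M⁻¹)) 0 := by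
  obtain ⟨u, rfl⟩ := hM
  have hline : HasDerivAt (fun t : 𝕜 => (u : Matrix n n 𝕜) + t • B) B 0 :=
    (((hasDerivAt_id (0 : 𝕜)).smul_const B).const_add _).congr_deriv (one_smul 𝕜 B)
  have hinv : HasFDerivAt Ring.inverse
      (-(ContinuousLinearMap.mulLeftRight 𝕜 (Matrix n n 𝕜) ↑u⁻¹) ↑u⁻¹)
      ((u : Matrix n n 𝕜) + (0 : 𝕜) • B) := by
    simpa using hasFDerivAt_ringInverse (𝕜 := 𝕜) u
  have h := hinv.comp_hasDerivAt 0 hline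
  simp only [Function.comp_def, ← nonsing_inv_eq_ringInverse] at h
  exact h.congr_deriv (by simp [coe_units_inv, mul_assoc])

theorem eventually_isUnit_add_smul {M : Matrix n n 𝕜} (hM : IsUnit M) (B : Matrix n n 𝕜) :
    ∀ᶠ s : 𝕜 in nhds 0, IsUnit (M + s • B) := by
  have hline : Continuous fun s : 𝕜 => M + s • B := by fun_prop
  exact hline.continuousAt.eventually_mem (Units.isOpen.mem_nhds (by simpa using hM))

theorem deriv_trace_mul_inv_add_smul (W : Matrix n n 𝕜) {M : Matrix n n 𝕜} (hM : IsUnit M)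
    (C : Matrix n n 𝕜) :
    deriv (fun t : 𝕜 => (W * (M + t • C)⁻¹).trace) 0 = -(W * (M⁻¹ * C * M⁻¹)).trace := by
  simpa using ((hasDerivAt_inv_add_smul hM C).const_mul W).matrix_trace.deriv

theorem hasDerivAt_trace_mul_inv_mul_inv (W : Matrix n n 𝕜) {M : Matrix n n 𝕜} (hM : IsUnit M)
    (A C : Matrix n n 𝕜) :
    HasDerivAt (fun s : 𝕜 => (W * ((M + s • A)⁻¹ * C * (M + s • A)⁻¹)).trace)
      (-(W * (M⁻¹ * A * M⁻¹ * C * M⁻¹)).trace - (W * (M⁻¹ * C * M⁻¹ * A * M⁻¹)).trace) 0 := by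
  have hX := hasDerivAt_inv_add_smul hM A
  have h := (((hX.mul_const C).mul hX).const_mul W).matrix_trace
  simpa [mul_add, mul_neg, neg_mul, trace_add, mul_assoc, sub_eq_add_neg] using h

theorem deriv_deriv_trace_mul_inv_add_smul_add_smul (W : Matrix n n 𝕜) {M : Matrix n n 𝕜}
    (hM : IsUnit M) (A C : Matrix n n 𝕜) :
    deriv (fun s : 𝕜 => deriv (fun t : 𝕜 => (W * (M + s • A + t • C)⁻¹).trace) 0) 0
      = (W * (M⁻¹ * A * M⁻¹ * C * M⁻¹)).trace + (W * (M⁻¹ * C * M⁻¹ * A * M⁻¹)).trace := by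
  have hinner : (fun s : 𝕜 => deriv (fun t : 𝕜 => (W * (M + s • A + t • C)⁻¹).trace) 0)
      =ᶠ[nhds 0] fun s => -(W * ((M + s • A)⁻¹ * C * (M + s • A)⁻¹)).trace := by
    filter_upwards [eventually_isUnit_add_smul hM A] with s hs
    exact deriv_trace_mul_inv_add_smul W hs C
  rw [hinner.deriv_eq, (hasDerivAt_trace_mul_inv_mul_inv W hM A C).fun_neg.deriv]
  ring

end Calculus

section RankOne

variable {R n : Type*} [CommSemiring R] [Fintype n]

theorem trace_mul_vecMulVec_mul_mul_vecMulVec (P Q : Matrix n n R) (u v x y : n → R) :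
    (P * vecMulVec u v * Q * vecMulVec x y).trace = (v ⬝ᵥ Q *ᵥ x) * (y ⬝ᵥ P *ᵥ u) := by
  rw [mul_vecMulVec P u v, vecMulVec_mul, vecMulVec_mul_vecMulVec, trace_vecMulVec,
    dotProduct_smul, smul_eq_mul, ← dotProduct_mulVec, dotProduct_comm (P *ᵥ u)]

theorem IsSymm.dotProduct_mulVec_comm {M : Matrix n n R} (hM : M.IsSymm) (x y : n → R) :
    x ⬝ᵥ M *ᵥ y = y ⬝ᵥ M *ᵥ x := by
  rw [dotProduct_mulVec, ← mulVec_transpose, hM.eq, dotProduct_comm]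

theorem isSymm_transpose_mul_mul {m : Type*} {A : Matrix n n R} (B : Matrix n m R)
    (hA : A.IsSymm) : (Bᵀ * A * B).IsSymm := by
  rw [IsSymm, transpose_mul, transpose_mul, transpose_transpose, hA.eq, Matrix.mul_assoc]

theorem trace_mul_mul_vecMulVec_mul_mul_vecMulVec_mul (W X : Matrix n n R) (a c : n → R) :
    (W * (X * vecMulVec a a * X * vecMulVec c c * X)).trace
      = (a ⬝ᵥ X *ᵥ c) * (c ⬝ᵥ (X * W * X) *ᵥ a) := by
  rw [← trace_mul_vecMulVec_mul_mul_vecMulVec, ← mul_assoc, trace_mul_comm _ X]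
  simp only [mul_assoc]

end RankOne

end Matrix

/-- For `L` real symmetric positive definite, `W` real symmetric,
and vectors `a, c`, the mixed second partial derivative at `(0, 0)` of
`g(s, t) = trace(W·(L + s·a·aᵀ + t·c·cᵀ)⁻¹)` equals
`2·(cᵀ·L⁻¹·W·L⁻¹·a)·(cᵀ·L⁻¹·a)`. -/
theorem mixed_partial_trace_inv (N : ℕ)
    (L W : Matrix (Fin N) (Fin N) ℝ)
    (hL : L.PosDef) (hW : W.IsSymm) (a c : Fin N → ℝ) :
    deriv (fun s : ℝ => deriv (fun t : ℝ =>
        (W * (L + s • Matrix.vecMulVec a a + t • Matrix.vecMulVec c c)⁻¹).trace) 0) 0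
      = 2 * (c ⬝ᵥ (L⁻¹ *ᵥ (W *ᵥ (L⁻¹ *ᵥ a)))) * (c ⬝ᵥ (L⁻¹ *ᵥ a)) := by
  have hX : L⁻¹.IsSymm := (isHermitian_iff_isSymm.mp hL.isHermitian).inv
  have hXWX : (L⁻¹ * W * L⁻¹).IsSymm := by
    simpa only [hX.eq] using isSymm_transpose_mul_mul L⁻¹ hW
  rw [deriv_deriv_trace_mul_inv_add_smul_add_smul W hL.isUnit,
    trace_mul_mul_vecMulVec_mul_mul_vecMulVec_mul, trace_mul_mul_vecMulVec_mul_mul_vecMulVec_mul,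
    hX.dotProduct_mulVec_comm a c, hXWX.dotProduct_mulVec_comm a c, mulVec_mulVec, mulVec_mulVec]
  ring
end
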